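/- arXiv:2308.09911 — 2 statements merged into one kernel-verified Lean document; each statement's English description precedes it below -/
import Mathlib

section
/- Let K ≥ 1, let τ > 0, let m ∈ ℝ, let S : Fin K → Fin K → ℝ be a similarity matrix, and let l : Fin K → Fin K → ℝ take values in {0,1} (correspondence labels), with q i j = 1 - l i j. Assume that for a fixed index i the positive sets {j : l i j = 1} and {j : l j i = 1} are nonempty and the negative sets {j : l i j = 0} and {j : l j i = 0} are nonempty. Define the weighted positive similarities S⁺_{i2t} = ∑_j α_{ij} · S i j with α_{ij} = (l i j · exp(S i j / τ)) / (∑_k l i k · exp(S i k / τ)), and S⁺_{t2i} = ∑_j α'_{ji} · S j i with α'_{ji} = (l j i · exp(S j i / τ)) / (∑_k l k i · exp(S k i / τ)). Define the Triplet Alignment Loss L_tal(i) = max(m - S⁺_{i2t} + τ·log(∑_j q i j · exp(S i j / τ)), 0) + max(m - S⁺_{t2i} + τ·log(∑_j q j i · exp(S j i / τ)), 0), and the Triplet Ranking Loss with hardest negatives L_trl(i) = max(m - S⁺_{i2t} + max_{j : l i j = 0} S i j, 0) + max(m - S⁺_{t2i} + max_{j : l j i = 0} S j i, 0). Then L_trl(i)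 ≤ L_tal(i). -/
open Finset Real

/-! The log-sum-exp `τ log ∑ exp (x / τ)` is a smooth maximum: it dominates every term, in particular
the hardest negative, and the TAL and TRL terms differ only in this summand. -/

theorem sup'_le_mul_log_sum_exp {ι : Type*} (s : Finset ι) (hs : s.Nonempty) (f : ι → ℝ)
    {τ : ℝ} (hτ : 0 < τ) :
    s.sup' hs f ≤ τ * log (∑ j ∈ s, exp (f j / τ)) := by
  obtain ⟨j, hj, hsup⟩ := s.exists_mem_eq_sup' hs f
  have hexp_le : exp (f j / τ) ≤ ∑ k ∈ s, exp (f k / τ) :=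
    single_le_sum (f := fun k => exp (f k / τ)) (fun k _ => (exp_pos _).le) hj
  calc s.sup' hs f = τ * log (exp (f j / τ)) := by rw [hsup, log_exp]; field_simp
    _ ≤ τ * log (∑ k ∈ s, exp (f k / τ)) := by gcongr

theorem sum_one_sub_mul_eq_sum_filter {ι : Type*} [Fintype ι] (g x : ι → ℝ)
    (hg : ∀ j, g j = 0 ∨ g j = 1) :
    ∑ j, (1 - g j) * x j = ∑ j ∈ univ.filter (fun j => g j = 0), x j := by
  rw [sum_filter]
  refine sum_congr rfl fun j _ => ?_
  rcases hg j with h | h <;> simp [h]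

theorem sup'_le_mul_log_sum_one_sub_mul_exp {ι : Type*} [Fintype ι] (g f : ι → ℝ)
    (hg : ∀ j, g j = 0 ∨ g j = 1) (hneg : (univ.filter (fun j => g j = 0)).Nonempty)
    {τ : ℝ} (hτ : 0 < τ) :
    (univ.filter (fun j => g j = 0)).sup' hneg f
      ≤ τ * log (∑ j, (1 - g j) * exp (f j / τ)) := by
  rw [sum_one_sub_mul_eq_sum_filter g _ hg]
  exact sup'_le_mul_log_sum_exp _ hneg f hτ

theorem tal_upper_bounds_trl_general (K : ℕ) (τ : ℝ) (hτ : 0 < τ) (m : ℝ)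
    (S l : Fin K → Fin K → ℝ) (i : Fin K)
    (hl : ∀ a b, l a b = 0 ∨ l a b = 1)
    (hneg1 : (Finset.univ.filter (fun j => l i j = 0)).Nonempty)
    (hneg2 : (Finset.univ.filter (fun j => l j i = 0)).Nonempty) :
    max (m - (∑ j, (l i j * Real.exp (S i j / τ) /
            ∑ k, l i k * Real.exp (S i k / τ)) * S i j)
        + (Finset.univ.filter (fun j => l i j = 0)).sup' hneg1 (fun j => S i j)) 0
      + max (m - (∑ j, (l j i * Real.exp (S j i / τ) /
            ∑ k, l k i * Real.exp (S k i / τ)) * S j i)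
        + (Finset.univ.filter (fun j => l j i = 0)).sup' hneg2 (fun j => S j i)) 0
    ≤ max (m - (∑ j, (l i j * Real.exp (S i j / τ) /
            ∑ k, l i k * Real.exp (S i k / τ)) * S i j)
        + τ * Real.log (∑ j, (1 - l i j) * Real.exp (S i j / τ))) 0
      + max (m - (∑ j, (l j i * Real.exp (S j i / τ) /
            ∑ k, l k i * Real.exp (S k i / τ)) * S j i)
        + τ * Real.log (∑ j, (1 - l j i) * Real.exp (S j i / τ))) 0 := by
  have hi2t := sup'_le_mul_log_sum_one_sub_mul_exp (l i) (S i) (hl i) hneg1 hτ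
  have ht2i := sup'_le_mul_log_sum_one_sub_mul_exp (l · i) (S · i) (hl · i) hneg2 hτ
  gcongr

/-- Lemma 1 of the paper: the Triplet Alignment Loss (TAL) is an upper bound of
the Triplet Ranking Loss (TRL) with the hardest negative samples.  Here
`S : Fin K → Fin K → ℝ` is the similarity matrix, `l` the binary correspondence
labels (`q i j = 1 - l i j`), the weighted positive similarities are the
softmax-weighted averages over the positive pairs, and the hardest negative is
the maximum similarity over the negative set. -/
theorem tal_upper_bounds_trl (K : ℕ) (hK : 1 ≤ K) (τ : ℝ) (hτ : 0 < τ) (m : ℝ)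
    (S l : Fin K → Fin K → ℝ) (i : Fin K)
    (hl : ∀ a b, l a b = 0 ∨ l a b = 1)
    (hpos1 : (Finset.univ.filter (fun j => l i j = 1)).Nonempty)
    (hpos2 : (Finset.univ.filter (fun j => l j i = 1)).Nonempty)
    (hneg1 : (Finset.univ.filter (fun j => l i j = 0)).Nonempty)
    (hneg2 : (Finset.univ.filter (fun j => l j i = 0)).Nonempty) :
    max (m - (∑ j, (l i j * Real.exp (S i j / τ) /
            ∑ k, l i k * Real.exp (S i k / τ)) * S i j)
        + (Finset.univ.filter (fun j => l i j = 0)).sup' hneg1 (fun j => S i j)) 0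
      + max (m - (∑ j, (l j i * Real.exp (S j i / τ) /
            ∑ k, l k i * Real.exp (S k i / τ)) * S j i)
        + (Finset.univ.filter (fun j => l j i = 0)).sup' hneg2 (fun j => S j i)) 0
    ≤ max (m - (∑ j, (l i j * Real.exp (S i j / τ) /
            ∑ k, l i k * Real.exp (S i k / τ)) * S i j)
        + τ * Real.log (∑ j, (1 - l i j) * Real.exp (S i j / τ))) 0
      + max (m - (∑ j, (l j i * Real.exp (S j i / τ) /
            ∑ k, l k i * Real.exp (S k i / τ)) * S j i)
        + τ * Real.log (∑ j, (1 - l j i) * Real.exp (S j i / τ))) 0 :=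
  tal_upper_bounds_trl_general K τ hτ m S l i hl hneg1 hneg2
end

section
/- Let K ≥ 1, let τ > 0, let m ∈ ℝ, let s : Fin K → ℝ, let a ∈ ℝ, and let q : Fin K → ℝ take values in {0,1} with support T = {j : q j = 1} nonempty. Then max(m - a + max_{j ∈ T} s j, 0) ≤ ∑_{j ∈ T} max(m - a + s j, 0) ≤ max(m - a + τ · log(∑_{j=1}^{K} q j · exp(s j / τ)), 0) + (|T| - 1) · max(m - a + max_{j ∈ T} s j, 0). -/
/-!
Every summand of TRL-S is a hinge of a score `s j ≤ max_T s`, so it lies between `0` and the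
TRL term, and the hardest negative itself is one of the summands. The TAL term dominates the
TRL term because the soft maximum `τ log ∑_j q_j exp (s_j / τ)` is at least every `s_i` with
`q_i = 1` once all weights are nonnegative.
-/

open Finset Real

theorem le_mul_log_sum_mul_exp_div {ι : Type*} {S : Finset ι} {τ : ℝ} (hτ : 0 < τ)
    {q : ι → ℝ} (s : ι → ℝ) (hq : ∀ j ∈ S, 0 ≤ q j) {i : ι} (hi : i ∈ S)
    (hqi : 1 ≤ q i) :
    s i ≤ τ * log (∑ j ∈ S, q j * exp (s j / τ)) := by
  have hterm : exp (s i / τ) ≤ q i * exp (s i / τ) :=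
    le_mul_of_one_le_left (exp_pos _).le hqi
  have hsum : exp (s i / τ) ≤ ∑ j ∈ S, q j * exp (s j / τ) :=
    hterm.trans <| single_le_sum (f := fun j => q j * exp (s j / τ))
      (fun j hj => mul_nonneg (hq j hj) (exp_pos _).le) hi
  rw [← div_le_iff₀' hτ, le_log_iff_exp_le ((exp_pos _).trans_le hsum)]
  exact hsum

theorem max_add_sup'_le_sum_max {ι : Type*} {T : Finset ι} (hT : T.Nonempty) (c : ℝ)
    (s : ι → ℝ) : max (c + T.sup' hT s) 0 ≤ ∑ j ∈ T, max (c + s j) 0 := by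
  obtain ⟨i, hi, hsup⟩ := T.exists_mem_eq_sup' hT s
  rw [hsup]
  exact single_le_sum (f := fun j => max (c + s j) 0) (fun _ _ => le_max_right _ _) hi

theorem sum_max_le_card_mul_max_add_sup' {ι : Type*} {T : Finset ι} (hT : T.Nonempty) (c : ℝ)
    (s : ι → ℝ) : ∑ j ∈ T, max (c + s j) 0 ≤ T.card * max (c + T.sup' hT s) 0 := by
  rw [← nsmul_eq_mul]
  refine sum_le_card_nsmul T _ _ fun j hj => ?_
  gcongr
  exact le_sup' s hj

theorem trl_le_trls_le_tal_chain_general (K : ℕ) (τ : ℝ) (hτ : 0 < τ)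
    (m a : ℝ) (s q : Fin K → ℝ) (hq : ∀ j, q j = 0 ∨ q j = 1)
    (hT : (Finset.univ.filter (fun j => q j = 1)).Nonempty) :
    max (m - a + (Finset.univ.filter (fun j => q j = 1)).sup' hT s) 0 ≤
      (∑ j ∈ Finset.univ.filter (fun j => q j = 1), max (m - a + s j) 0) ∧
    (∑ j ∈ Finset.univ.filter (fun j => q j = 1), max (m - a + s j) 0) ≤
      max (m - a + τ * Real.log (∑ j, q j * Real.exp (s j / τ))) 0 +
        ((Finset.univ.filter (fun j => q j = 1)).card - 1 : ℝ) *
          max (m - a + (Finset.univ.filter (fun j => q j = 1)).sup' hT s) 0 := by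
  set T := univ.filter (fun j => q j = 1)
  set trl := max (m - a + T.sup' hT s) 0
  have hq_nonneg : ∀ j ∈ univ, 0 ≤ q j := fun j _ => by rcases hq j with h | h <;> simp [h]
  have hsup_le_log : T.sup' hT s ≤ τ * log (∑ j, q j * exp (s j / τ)) :=
    sup'_le hT s fun i hi =>
      le_mul_log_sum_mul_exp_div hτ s hq_nonneg (mem_univ i) (mem_filter.mp hi).2.ge
  have htrl_le_tal : trl ≤ max (m - a + τ * log (∑ j, q j * exp (s j / τ))) 0 := by
    unfold trl; gcongr
  refine ⟨max_add_sup'_le_sum_max hT _ s, ?_⟩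
  calc ∑ j ∈ T, max (m - a + s j) 0 ≤ T.card * trl := sum_max_le_card_mul_max_add_sup' hT _ s
    _ = trl + (T.card - 1 : ℝ) * trl := by ring
    _ ≤ _ := by gcongr

/-- Chain of the three single-anchor loss terms: the hardest-negative TRL term
is at most the summation version TRL-S, which in turn is at most the TAL term
plus `(|T| - 1)` copies of the TRL term. -/
theorem trl_le_trls_le_tal_chain (K : ℕ) (hK : 1 ≤ K) (τ : ℝ) (hτ : 0 < τ)
    (m a : ℝ) (s q : Fin K → ℝ) (hq : ∀ j, q j = 0 ∨ q j = 1)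
    (hT : (Finset.univ.filter (fun j => q j = 1)).Nonempty) :
    max (m - a + (Finset.univ.filter (fun j => q j = 1)).sup' hT s) 0 ≤
      (∑ j ∈ Finset.univ.filter (fun j => q j = 1), max (m - a + s j) 0) ∧
    (∑ j ∈ Finset.univ.filter (fun j => q j = 1), max (m - a + s j) 0) ≤
      max (m - a + τ * Real.log (∑ j, q j * Real.exp (s j / τ))) 0 +
        ((Finset.univ.filter (fun j => q j = 1)).card - 1 : ℝ) *
          max (m - a + (Finset.univ.filter (fun j => q j = 1)).sup' hT s) 0 :=
  trl_le_trls_le_tal_chain_general K τ hτ m a s q hq hT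
end
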